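/- arXiv:1706.00908 — 2 statements merged into one kernel-verified Lean document; each statement's English description precedes it below -/
import Mathlib

section
/- Let n ≥ 1, let δ ∈ ℝ, let E be the n×n matrix with E_{ij} = 1 for i > j and E_{ij} = 0 otherwise, and let L̄ := −(I + (1−δ)E)^{−1}. Then the entries of L̄E^T are given by (L̄E^T)_{ij} = −δ^{i−1} for i < j and (L̄E^T)_{ij} = δ^{i−j} − δ^{i−1} for i ≥ j. -/
/-!
Since `A := I + (1 - δ) E` is unit lower triangular it is invertible, and `L̄ Eᵀ = C` amounts to
`A C = -Eᵀ`. Row `i` of `A C` is `c i + (1 - δ) ∑_{m < i} c m` for the column `c` of `C`, and that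
column is `δ^(m-j) [j ≤ m] - δ^m`: a shifted geometric sequence minus a geometric one. For a
geometric sequence `δ^i + (1 - δ) ∑_{m < i} δ^m = 1` telescopes, so the two parts contribute
`[j ≤ i]` and `1`, whose difference is `-[i < j]`.
-/

open Matrix

/-- The strictly lower triangular matrix of all ones below the diagonal. -/
def matE (n : ℕ) : Matrix (Fin n) (Fin n) ℝ :=
  Matrix.of fun i j => if (j : ℕ) < (i : ℕ) then 1 else 0

open Finset

section Sequences

variable {R : Type*} [CommRing R] (δ : R)

theorem pow_add_one_sub_mul_geom_sum (i : ℕ) :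
    δ ^ i + (1 - δ) * ∑ m ∈ range i, δ ^ m = 1 := by
  rw [mul_neg_geom_sum]; ring

theorem sum_range_ite_le_pow_sub (i j : ℕ) :
    ∑ m ∈ range i, (if j ≤ m then δ ^ (m - j) else 0) = ∑ m ∈ range (i - j), δ ^ m := by
  induction i with
  | zero => simp
  | succ i ih =>
    rw [sum_range_succ, ih]
    by_cases hji : j ≤ i
    · rw [if_pos hji, Nat.sub_add_comm hji, sum_range_succ]
    · rw [if_neg hji, add_zero, Nat.sub_eq_zero_of_le (by omega), Nat.sub_eq_zero_of_le (by omega)]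

theorem ite_le_pow_sub_add_one_sub_mul_sum (i j : ℕ) :
    (if j ≤ i then δ ^ (i - j) else 0) +
        (1 - δ) * ∑ m ∈ range i, (if j ≤ m then δ ^ (m - j) else 0) = if j ≤ i then 1 else 0 := by
  rw [sum_range_ite_le_pow_sub]
  split_ifs with hji
  · exact pow_add_one_sub_mul_geom_sum δ (i - j)
  · simp [Nat.sub_eq_zero_of_le (le_of_not_ge hji)]

-- The claimed entries of `L̄ Eᵀ` in `0`-based indices, so the paper's `δ^(i-1)` is `δ ^ i`.
def lbarEtEntry (i j : ℕ) : R :=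
  if i < j then -δ ^ i else δ ^ (i - j) - δ ^ i

theorem lbarEtEntry_eq (i j : ℕ) :
    lbarEtEntry δ i j = (if j ≤ i then δ ^ (i - j) else 0) - δ ^ i := by
  unfold lbarEtEntry
  split_ifs <;> first | omega | ring

theorem lbarEtEntry_add_one_sub_mul_sum (i j : ℕ) :
    lbarEtEntry δ i j + (1 - δ) * ∑ m ∈ range i, lbarEtEntry δ m j = -if i < j then 1 else 0 := by
  simp only [lbarEtEntry_eq, sum_sub_distrib]
  have hshift := ite_le_pow_sub_add_one_sub_mul_sum δ i j
  have hgeom := pow_add_one_sub_mul_geom_sum δ i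
  have hcases : (if j ≤ i then (1 : R) else 0) - 1 = -if i < j then 1 else 0 := by
    split_ifs <;> first | omega | ring
  linear_combination hshift - hgeom + hcases

end Sequences

theorem matE_mul_of_apply {n : ℕ} (u : ℕ → ℕ → ℝ) (i j : Fin n) :
    (matE n * of fun k l : Fin n => u k l) i j = ∑ m ∈ range i, u m j := by
  rw [mul_apply]
  simp only [matE, of_apply, ite_mul, one_mul, zero_mul]
  rw [Fin.sum_univ_eq_sum_range (fun m => if m < (i : ℕ) then u m j else 0), ← sum_filter]
  congr 1
  ext m
  simp only [mem_filter, mem_range]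
  have := i.isLt
  omega

theorem one_add_smul_matE_mul_of_apply {n : ℕ} (c : ℝ) (u : ℕ → ℕ → ℝ) (i j : Fin n) :
    ((1 + c • matE n) * of fun k l : Fin n => u k l) i j = u i j + c * ∑ m ∈ range i, u m j := by
  rw [add_mul, one_mul, smul_mul, Matrix.add_apply, Matrix.smul_apply, smul_eq_mul,
    matE_mul_of_apply, of_apply]

theorem matE_transpose_apply {n : ℕ} (i j : Fin n) :
    (matE n)ᵀ i j = if (i : ℕ) < j then 1 else 0 := rfl

theorem det_one_add_smul_matE (n : ℕ) (c : ℝ) : (1 + c • matE n).det = 1 := by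
  have hlower : (1 + c • matE n).IsLowerTriangular := fun i j (hij : i < j) => by
    simp [matE, hij.ne, hij.not_gt]
  rw [det_of_isLowerTriangular _ hlower]
  simp [matE]

theorem LbarEt_entries_general (n : ℕ) (δ : ℝ) :
    ∀ i j : Fin n,
      ((-((1 : Matrix (Fin n) (Fin n) ℝ) + (1 - δ) • matE n)⁻¹) * (matE n)ᵀ) i j =
        if (i : ℕ) < (j : ℕ) then -δ ^ (i : ℕ)
        else δ ^ ((i : ℕ) - (j : ℕ)) - δ ^ (i : ℕ) := by
  set A : Matrix (Fin n) (Fin n) ℝ := 1 + (1 - δ) • matE n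
  set C : Matrix (Fin n) (Fin n) ℝ := of fun i j : Fin n => lbarEtEntry δ i j
  have hAC : A * C = -(matE n)ᵀ := by
    ext i j
    rw [one_add_smul_matE_mul_of_apply, lbarEtEntry_add_one_sub_mul_sum, neg_apply,
      matE_transpose_apply]
  have hdet : IsUnit A.det := by rw [det_one_add_smul_matE]; exact isUnit_one
  intro i j
  rw [show (matE n)ᵀ = -(A * C) by rw [hAC, neg_neg], neg_mul_neg,
    nonsing_inv_mul_cancel_left _ _ hdet]
  rfl

theorem LbarEt_entries (n : ℕ) (hn : 1 ≤ n) (δ : ℝ) :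
    ∀ i j : Fin n,
      ((-((1 : Matrix (Fin n) (Fin n) ℝ) + (1 - δ) • matE n)⁻¹) * (matE n)ᵀ) i j =
        if (i : ℕ) < (j : ℕ) then -δ ^ (i : ℕ)
        else δ ^ ((i : ℕ) - (j : ℕ)) - δ ^ (i : ℕ) :=
  LbarEt_entries_general n δ
end

section
/- Let n ≥ 2, let F be the n×n matrix with F_{i,i+1} = 1 for i = 1,…,n−1 and all other entries 0, and let D be an n×n diagonal matrix. For a permutation matrix P write D_P := P^T D P. Then the average over all n! permutation matrices P satisfies (1/n!)·∑_{P} P ( F D_P − 𝟏 e₂^T D_P + D_P F^T − D_P e₂ 𝟏^T ) P^T = −(2/n)·D. -/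
/-!
With `P = permMat σ` and `M = F - 𝟏 e₂ᵀ`, the summand is `(P M Pᵀ) D + D (P M Pᵀ)ᵀ`, so the
average is governed by the symmetrisation `∑_σ P M Pᵀ = ∑_σ M.submatrix σ σ`. Averaging over the
(doubly transitive) action of the symmetric group, its diagonal entries are `(n-1)! tr M` and its
off-diagonal entries are `(n-2)!` times the off-diagonal sum of `M`. Here both `F` and `𝟏 e₂ᵀ` have
off-diagonal sum `n - 1` and `tr M = -1`, so the symmetrisation is `-(n-1)! • 1` and the average
is `-(2/n) D`.
-/

open Matrix

/-- The matrix with ones on the superdiagonal. -/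
def matF (n : ℕ) : Matrix (Fin n) (Fin n) ℝ :=
  Matrix.of fun i j => if (i : ℕ) + 1 = (j : ℕ) then 1 else 0

/-- The permutation matrix `P` of `σ`, satisfying `P e_j = e_{σ j}`. -/
def permMat {n : ℕ} (σ : Equiv.Perm (Fin n)) : Matrix (Fin n) (Fin n) ℝ :=
  Matrix.of fun i j => if i = σ j then 1 else 0

open Finset Equiv Fintype
open scoped Nat

namespace Equiv.Perm

theorem exists_apply_eq_and_apply_eq {α : Type*} [DecidableEq α] {i j k l : α} (hij : i ≠ j)
    (hkl : k ≠ l) : ∃ τ : Perm α, τ k = i ∧ τ l = j := by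
  have hl : swap k i l ≠ i := fun h =>
    hkl ((swap k i).injective (h.trans (swap_apply_left k i).symm)).symm
  exact ⟨swap (swap k i l) j * swap k i, by simp [swap_apply_of_ne_of_ne hl.symm hij], by simp⟩

variable {α : Type*} [Fintype α] [DecidableEq α]

section AddCommMonoid

variable {M : Type*} [AddCommMonoid M]

theorem sum_apply_eq_sum_apply (f : α → M) (i k : α) :
    ∑ σ : Perm α, f (σ i) = ∑ σ : Perm α, f (σ k) := by
  rw [← Equiv.sum_comp (Equiv.mulRight (swap i k))]
  simp

theorem sum_apply_apply_eq_sum_apply_apply (f : α → α → M) {i j k l : α} (hij : i ≠ j)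
    (hkl : k ≠ l) : ∑ σ : Perm α, f (σ i) (σ j) = ∑ σ : Perm α, f (σ k) (σ l) := by
  obtain ⟨τ, hk, hl⟩ := exists_apply_eq_and_apply_eq hij hkl
  conv_rhs => rw [← Equiv.sum_comp (Equiv.mulRight τ)]
  simp [hk, hl]

theorem sum_sum_apply (f : α → M) : ∑ σ : Perm α, ∑ k, f (σ k) = (card α)! • ∑ a, f a := by
  simp [Equiv.sum_comp _ f, Fintype.card_perm]

theorem sum_sum_sum_apply_apply (g : α → α → M) :
    ∑ σ : Perm α, ∑ k, ∑ l, g (σ k) (σ l) = (card α)! • ∑ a, ∑ b, g a b := by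
  rw [← sum_sum_apply]
  exact Finset.sum_congr rfl fun σ _ =>
    Finset.sum_congr rfl fun k _ => Equiv.sum_comp σ (g (σ k))

end AddCommMonoid

variable {K : Type*} [Field K] [CharZero K]

theorem sum_apply (f : α → K) (i : α) :
    ∑ σ : Perm α, f (σ i) = (card α - 1)! * ∑ a, f a := by
  have : Nonempty α := ⟨i⟩
  have hcard : card α ≠ 0 := Fintype.card_ne_zero
  have hscaled : (card α : K) * ∑ σ : Perm α, f (σ i) = (card α)! * ∑ a, f a := by
    rw [← nsmul_eq_mul, ← nsmul_eq_mul, ← sum_sum_apply, Finset.sum_comm]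
    simp [← sum_apply_eq_sum_apply f i]
  rw [← Nat.mul_factorial_pred hcard, Nat.cast_mul, mul_assoc] at hscaled
  exact mul_left_cancel₀ (Nat.cast_ne_zero.mpr hcard) hscaled

theorem sum_apply_apply (f : α → α → K) {i j : α} (hij : i ≠ j) :
    ∑ σ : Perm α, f (σ i) (σ j) = (card α - 2)! * (∑ a, ∑ b, f a b - ∑ a, f a a) := by
  have : Nontrivial α := ⟨⟨i, j, hij⟩⟩
  have hcard : 1 < card α := Fintype.one_lt_card
  set Y : α → α → K := fun k l => ∑ σ : Perm α, f (σ k) (σ l)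
  have hscaled : (card α : K) * (card α - 1 : ℕ) * Y i j =
      (card α)! * (∑ a, ∑ b, f a b - ∑ a, f a a) :=
    calc (card α : K) * (card α - 1 : ℕ) * Y i j = ∑ k, ∑ l ∈ univ.erase k, Y i j := by
          simp [mul_assoc]
      _ = ∑ k, ∑ l ∈ univ.erase k, Y k l :=
          Finset.sum_congr rfl fun k _ => Finset.sum_congr rfl fun l hl =>
            sum_apply_apply_eq_sum_apply_apply f hij (ne_of_mem_erase hl).symm
      _ = ∑ k, ∑ l, Y k l - ∑ k, Y k k := by
          simp_rw [Finset.sum_erase_eq_sub (mem_univ _), Finset.sum_sub_distrib]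
      _ = (card α)! * (∑ a, ∑ b, f a b - ∑ a, f a a) := by
          rw [mul_sub, ← nsmul_eq_mul, ← nsmul_eq_mul, ← sum_sum_apply fun a => f a a,
            ← sum_sum_sum_apply_apply]
          congr 1
          · exact (Finset.sum_congr rfl fun k _ => Finset.sum_comm).trans Finset.sum_comm
          · exact Finset.sum_comm
  have hfact : (card α)! = card α * (card α - 1) * (card α - 2)! := by
    rw [show card α - 2 = card α - 1 - 1 by omega, mul_assoc, Nat.mul_factorial_pred (by omega),
      Nat.mul_factorial_pred (by omega)]
  refine mul_left_cancel₀ (mul_ne_zero (Nat.cast_ne_zero.mpr (by omega))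
    (Nat.cast_ne_zero.mpr (by omega))) (hscaled.trans ?_)
  rw [hfact]
  push_cast
  ring

end Equiv.Perm

namespace Matrix

theorem sum_perm_submatrix {α K : Type*} [Fintype α] [DecidableEq α] [Field K] [CharZero K]
    (M : Matrix α α K) (hM : ∑ a, ∑ b, M a b = M.trace) :
    ∑ σ : Perm α, M.submatrix σ σ = ((card α - 1)! * M.trace) • 1 := by
  ext i j
  rw [Matrix.sum_apply, smul_apply, smul_eq_mul]
  obtain rfl | hij := eq_or_ne i j
  · simp [Perm.sum_apply (fun a => M a a), trace]
  · simp [Perm.sum_apply_apply M hij, hM, trace, hij]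

theorem conj_mul_add_mul_transpose {n R : Type*} [Fintype n] [DecidableEq n] [CommSemiring R]
    {P M D : Matrix n n R} (hP : P * Pᵀ = 1) :
    P * (M * (Pᵀ * D * P) + Pᵀ * D * P * Mᵀ) * Pᵀ = P * M * Pᵀ * D + D * (P * M * Pᵀ)ᵀ := by
  have hP' (X : Matrix n n R) : P * (Pᵀ * X) = X := by
    rw [← Matrix.mul_assoc, hP, Matrix.one_mul]
  simp only [Matrix.mul_add, Matrix.add_mul, Matrix.mul_assoc, transpose_mul, transpose_transpose,
    hP, hP', Matrix.mul_one]

end Matrix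

theorem permMat_eq_permMatrix {n : ℕ} (σ : Perm (Fin n)) : permMat σ = (σ⁻¹).permMatrix ℝ := by
  ext i j
  simp [permMat, PEquiv.toMatrix_apply, Equiv.eq_symm_apply, eq_comm]

theorem permMat_mul_transpose {n : ℕ} (σ : Perm (Fin n)) : permMat σ * (permMat σ)ᵀ = 1 := by
  rw [permMat_eq_permMatrix, transpose_permMatrix, ← permMatrix_mul, inv_mul_cancel, permMatrix_one]

theorem permMat_mul_mul_transpose {n : ℕ} (σ : Perm (Fin n)) (M : Matrix (Fin n) (Fin n) ℝ) :
    permMat σ * M * (permMat σ)ᵀ = M.submatrix ⇑σ⁻¹ ⇑σ⁻¹ := by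
  rw [permMat_eq_permMatrix, transpose_permMatrix, inv_inv, PEquiv.toMatrix_toPEquiv_mul,
    PEquiv.mul_toMatrix_toPEquiv]
  rfl

theorem sum_permMat_mul_mul_transpose {n : ℕ} (M : Matrix (Fin n) (Fin n) ℝ)
    (hM : ∑ a, ∑ b, M a b = M.trace) :
    ∑ σ : Perm (Fin n), permMat σ * M * (permMat σ)ᵀ = ((n - 1)! * M.trace) • 1 := by
  simp_rw [permMat_mul_mul_transpose]
  rw [Fintype.sum_equiv (Equiv.inv (Perm (Fin n))) (fun σ => M.submatrix ⇑σ⁻¹ ⇑σ⁻¹)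
      (fun σ => M.submatrix σ σ) fun _ => rfl,
    sum_perm_submatrix M hM, Fintype.card_fin]

theorem sum_matF (n : ℕ) (hn : n ≠ 0) : ∑ a, ∑ b, matF n a b = (n : ℝ) - 1 := by
  obtain ⟨m, rfl⟩ := Nat.exists_eq_succ_of_ne_zero hn
  have row (a : Fin m) (b : Fin (m + 1)) :
      matF (m + 1) a.castSucc b = if a.succ = b then 1 else 0 := by
    simp [matF, Fin.ext_iff]
  have last_row (b : Fin (m + 1)) : matF (m + 1) (Fin.last m) b = 0 := by
    simp [matF]
    omega
  rw [Fin.sum_univ_castSucc]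
  simp [row, last_row]

theorem trace_matF (n : ℕ) : (matF n).trace = 0 := by
  simp [matF, trace]

theorem trace_matF_sub_vecMulVec {n : ℕ} (e : Fin n) :
    (matF n - vecMulVec (fun _ => 1) (Pi.single e 1)).trace = -1 := by
  simp [trace_matF, trace_vecMulVec]

theorem sum_sum_matF_sub_vecMulVec {n : ℕ} (e : Fin n) :
    ∑ a, ∑ b, (matF n - vecMulVec (fun _ => 1) (Pi.single e 1) : Matrix (Fin n) (Fin n) ℝ) a b
      = -1 := by
  simp [sum_sub_distrib, sum_matF n e.pos.ne', vecMulVec_apply]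

theorem average_deltaD_term (n : ℕ) (hn : 2 ≤ n) (d : Fin n → ℝ) :
    ((n.factorial : ℝ))⁻¹ •
        ∑ σ : Equiv.Perm (Fin n),
          permMat σ *
            (matF n * ((permMat σ)ᵀ * Matrix.diagonal d * permMat σ)
              - Matrix.vecMulVec (fun _ => 1) (Pi.single (⟨1, by omega⟩ : Fin n) 1) *
                  ((permMat σ)ᵀ * Matrix.diagonal d * permMat σ)
              + ((permMat σ)ᵀ * Matrix.diagonal d * permMat σ) * (matF n)ᵀ
              - ((permMat σ)ᵀ * Matrix.diagonal d * permMat σ) *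
                  Matrix.vecMulVec (Pi.single (⟨1, by omega⟩ : Fin n) 1) (fun _ => 1)) *
            (permMat σ)ᵀ
      = (-(2 / (n : ℝ))) • Matrix.diagonal d := by
  set e : Fin n := ⟨1, by omega⟩
  have hsplit (F J X : Matrix (Fin n) (Fin n) ℝ) :
      F * X - J * X + X * Fᵀ - X * Jᵀ = (F - J) * X + X * (F - J)ᵀ := by
    simp only [Matrix.sub_mul, Matrix.mul_sub, transpose_sub]
    abel
  simp_rw [← transpose_vecMulVec (fun _ => (1 : ℝ)) (Pi.single e 1), hsplit,
    conj_mul_add_mul_transpose (permMat_mul_transpose _)]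
  rw [sum_add_distrib, ← Finset.sum_mul, ← Finset.mul_sum, ← transpose_sum,
    sum_permMat_mul_mul_transpose _ (by rw [sum_sum_matF_sub_vecMulVec, trace_matF_sub_vecMulVec]),
    trace_matF_sub_vecMulVec]
  simp only [smul_mul, Matrix.one_mul, transpose_smul, transpose_one, Matrix.mul_smul,
    Matrix.mul_one, ← add_smul, smul_smul]
  congr 1
  rw [← Nat.mul_factorial_pred (by omega : n ≠ 0)]
  push_cast
  field_simp
  ring
end
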